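/- Let w be a Schwarz function with Taylor expansion w(z) = w₁z + w₂z² + ⋯, and let t be a real number with 0 < t < 1. Then |w₂ − t·w₁²| + (1 − t)·|w₁|² ≤ 1. -/

import Mathlib

/-!
The slope `g = dslope w 0`, i.e. `w(z)/z`, maps the disc into the closed disc by the Schwarz
lemma, with `g 0 = w₁` and `g' 0 = w₂`. The Schwarz–Pick bound `|g' 0| ≤ 1 - |g 0|²` gives
`|w₂| ≤ 1 - |w₁|²`, and the triangle inequality `|w₂ - t w₁²| ≤ |w₂| + t |w₁|²` finishes.
-/

open Metric Set ComplexConjugate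

theorem AnalyticAt.deriv_dslope_self {𝕜 E : Type*} [NontriviallyNormedField 𝕜] [CharZero 𝕜]
    [NormedAddCommGroup E] [NormedSpace 𝕜 E] [CompleteSpace E] {f : 𝕜 → E} {c : 𝕜}
    (hf : AnalyticAt 𝕜 f c) : deriv (dslope f c) c = (2 : 𝕜)⁻¹ • iteratedDeriv 2 f c := by
  obtain ⟨p, r, hp⟩ := hf
  rw [hp.hasFPowerSeriesAt.has_fpower_series_dslope_fslope.deriv, iteratedDeriv_eq_iteratedFDeriv,
    ← hp.factorial_smul, Nat.factorial_two, ← ofNat_smul_eq_nsmul 𝕜, inv_smul_smul₀ two_ne_zero]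
  exact p.coeff_fslope

namespace Complex

theorem normSq_one_sub_conj_mul_sub_normSq_sub (a z : ℂ) :
    normSq (1 - conj a * z) - normSq (z - a) = (1 - normSq a) * (1 - normSq z) := by
  simp only [normSq_apply, sub_re, sub_im, mul_re, mul_im, one_re, one_im, conj_re, conj_im]
  ring

theorem norm_sub_le_norm_one_sub_conj_mul {a z : ℂ} (ha : ‖a‖ ≤ 1) (hz : ‖z‖ ≤ 1) :
    ‖z - a‖ ≤ ‖1 - conj a * z‖ := by
  have ha' : normSq a ≤ 1 := by rw [← Complex.sq_norm]; exact pow_le_one₀ (norm_nonneg a) ha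
  have hz' : normSq z ≤ 1 := by rw [← Complex.sq_norm]; exact pow_le_one₀ (norm_nonneg z) hz
  have := normSq_one_sub_conj_mul_sub_normSq_sub a z
  rw [← sq_le_sq₀ (norm_nonneg _) (norm_nonneg _), Complex.sq_norm, Complex.sq_norm]
  nlinarith [mul_nonneg (sub_nonneg.2 ha') (sub_nonneg.2 hz')]

theorem one_sub_conj_mul_ne_zero {a z : ℂ} (ha : ‖a‖ < 1) (hz : ‖z‖ ≤ 1) :
    1 - conj a * z ≠ 0 := by
  refine sub_ne_zero.2 fun h ↦ ?_
  have : ‖conj a * z‖ < 1 := by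
    rw [norm_mul, norm_conj]
    exact mul_lt_one_of_nonneg_of_lt_one_left (norm_nonneg a) ha hz
  simp [← h] at this

/-- Compose `g` with the disc automorphism sending `g 0` to `0` and apply the Schwarz lemma. -/
theorem norm_deriv_le_one_sub_sq_of_norm_lt_one {g : ℂ → ℂ}
    (hg : DifferentiableOn ℂ g (ball 0 1)) (hmaps : MapsTo g (ball 0 1) (closedBall 0 1))
    (hg0 : ‖g 0‖ < 1) : ‖deriv g 0‖ ≤ 1 - ‖g 0‖ ^ 2 := by
  set a := g 0
  have hden : ∀ z ∈ ball (0 : ℂ) 1, 1 - conj a * g z ≠ 0 := fun z hz ↦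
    one_sub_conj_mul_ne_zero hg0 (mem_closedBall_zero_iff.1 (hmaps hz))
  set h : ℂ → ℂ := fun z ↦ (g z - a) / (1 - conj a * g z)
  have hh : DifferentiableOn ℂ h (ball 0 1) :=
    (hg.sub_const a).div ((differentiableOn_const 1).sub (hg.const_mul _)) hden
  have hh0 : h 0 = 0 := by simp [h, a]
  have hmaps_h : MapsTo h (ball 0 1) (closedBall (h 0) 1) := fun z hz ↦ by
    rw [hh0, mem_closedBall_zero_iff, norm_div]
    exact div_le_one_of_le₀ (norm_sub_le_norm_one_sub_conj_mul hg0.le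
      (mem_closedBall_zero_iff.1 (hmaps hz))) (norm_nonneg _)
  have hpos : 0 < 1 - ‖a‖ ^ 2 := by nlinarith [norm_nonneg a]
  have hderiv : HasDerivAt h (deriv g 0 / (1 - ‖a‖ ^ 2 : ℝ)) 0 := by
    have hg' : HasDerivAt g (deriv g 0) 0 :=
      (hg.differentiableAt (ball_mem_nhds 0 one_pos)).hasDerivAt
    refine ((hg'.sub_const a).div ((hg'.const_mul (conj a)).const_sub 1)
      (hden 0 (mem_ball_self one_pos))).congr_deriv ?_
    have hden0 : 1 - conj a * a ≠ 0 := hden 0 (mem_ball_self one_pos)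
    rw [show g 0 = a from rfl, sub_self, zero_mul, sub_zero, ofReal_sub, ofReal_one, ofReal_pow,
      ← conj_mul']
    field_simp
  have := norm_deriv_le_one_of_mapsTo_ball hh hmaps_h one_pos
  rwa [hderiv.deriv, norm_div, norm_real, Real.norm_of_nonneg hpos.le, div_le_one hpos] at this

theorem norm_deriv_le_one_sub_sq_of_mapsTo_closedBall {g : ℂ → ℂ}
    (hg : DifferentiableOn ℂ g (ball 0 1)) (hmaps : MapsTo g (ball 0 1) (closedBall 0 1)) :
    ‖deriv g 0‖ ≤ 1 - ‖g 0‖ ^ 2 := by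
  have h0 : (0 : ℂ) ∈ ball (0 : ℂ) 1 := mem_ball_self one_pos
  rcases (mem_closedBall_zero_iff.1 (hmaps h0)).lt_or_eq with hlt | heq
  · exact norm_deriv_le_one_sub_sq_of_norm_lt_one hg hmaps hlt
  · have hmax : IsLocalMax (norm ∘ g) 0 :=
      Filter.mem_of_superset (ball_mem_nhds 0 one_pos) fun z hz ↦
        (mem_closedBall_zero_iff.1 (hmaps hz)).trans heq.ge
    have hconst : g =ᶠ[nhds 0] fun _ ↦ g 0 :=
      eventually_eq_of_isLocalMax_norm (hg.eventually_differentiableAt (ball_mem_nhds 0 one_pos))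
        hmax
    simp [hconst.deriv_eq, heq]

end Complex

theorem schwarz_coeff_bound_improved_pos_general
    (w : ℂ → ℂ)
    (hw : AnalyticOnNhd ℂ w (Metric.ball (0 : ℂ) 1))
    (hw0 : w 0 = 0)
    (hwb : ∀ z ∈ Metric.ball (0 : ℂ) 1, ‖w z‖ < 1)
    (w1 w2 : ℂ)
    (hw1 : w1 = deriv w 0)
    (hw2 : w2 = iteratedDeriv 2 w 0 / 2)
    (t : ℝ) (ht1 : 0 < t) :
    ‖w2 - (t : ℂ) * w1 ^ 2‖ + (1 - t) * ‖w1‖ ^ 2 ≤ 1 := by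
  set g := dslope w 0
  have hg : DifferentiableOn ℂ g (ball 0 1) :=
    (Complex.differentiableOn_dslope (ball_mem_nhds 0 one_pos)).2 hw.differentiableOn
  have hmaps : MapsTo g (ball 0 1) (closedBall 0 1) := fun z hz ↦ by
    simpa using Complex.norm_dslope_le_div_of_mapsTo_ball hw.differentiableOn
      (fun z hz ↦ by simpa [hw0] using (hwb z hz).le) hz
  have hg0 : g 0 = w1 := by rw [hw1]; exact dslope_same w 0
  have hg'0 : deriv g 0 = w2 := by
    rw [hw2, (hw 0 (mem_ball_self one_pos)).deriv_dslope_self, smul_eq_mul, inv_mul_eq_div]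
  have hpick := Complex.norm_deriv_le_one_sub_sq_of_mapsTo_closedBall hg hmaps
  rw [hg0, hg'0] at hpick
  calc ‖w2 - (t : ℂ) * w1 ^ 2‖ + (1 - t) * ‖w1‖ ^ 2
      ≤ ‖w2‖ + t * ‖w1‖ ^ 2 + (1 - t) * ‖w1‖ ^ 2 := by
        gcongr
        refine (norm_sub_le _ _).trans_eq ?_
        rw [norm_mul, norm_pow, Complex.norm_real, Real.norm_of_nonneg ht1.le]
    _ ≤ 1 := by linarith

theorem schwarz_coeff_bound_improved_pos
    (w : ℂ → ℂ)
    (hw : AnalyticOnNhd ℂ w (Metric.ball (0 : ℂ) 1))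
    (hw0 : w 0 = 0)
    (hwb : ∀ z ∈ Metric.ball (0 : ℂ) 1, ‖w z‖ < 1)
    (w1 w2 : ℂ)
    (hw1 : w1 = deriv w 0)
    (hw2 : w2 = iteratedDeriv 2 w 0 / 2)
    (t : ℝ) (ht1 : 0 < t) (ht2 : t < 1) :
    ‖w2 - (t : ℂ) * w1 ^ 2‖ + (1 - t) * ‖w1‖ ^ 2 ≤ 1 :=
  schwarz_coeff_bound_improved_pos_general w hw hw0 hwb w1 w2 hw1 hw2 t ht1
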